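/- Let x < a and b < 0, and let f(s) = (a−x)·s^{−3/2}·φ((a + bs − x)/√s) for s > 0 be the first-passage-time density of Brownian motion started at x through the line a + bt. Then ∫_0^∞ (1 − 2Φ(b√s))·f(s) ds ≤ 1 − 2Φ(−√((a−x)·|b|)); that is, P(T₂ = +∞) ≤ γ(b) where γ(b) = 2·sgn(b)·(Φ(b√((a−x)/|b|)) − 1/2), by Jensen's inequality applied to the concave function s ↦ 1 − 2Φ(b√s) and the mean E(τ₁) = (a−x)/|b|. -/

import Mathlib

/-!
For `b < 0` the first-passage density `f = fpt a x b` is the inverse Gaussian density: it has the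
closed-form antiderivatives `fptCDF` and `fptPartialMean`, whose limits at `0` and `∞` show that `f`
is a probability density on `(0, ∞)` with mean `m = (a - x) / |b|`. The function
`h s = 1 - 2 Φ(b √s)` is concave there, its derivative `|b| φ(b √s) / √s` being decreasing, so `h`
lies below its tangent at `m`. Integrating against `f` gives Jensen's inequality
`∫ h f ≤ h m`, and `b √m = -√((a - x) |b|)`.
-/

open MeasureTheory

/-- The standard normal density `φ`. -/
noncomputable def stdPhi (z : ℝ) : ℝ := Real.exp (-z ^ 2 / 2) / Real.sqrt (2 * Real.pi)

/-- The standard normal cumulative distribution function `Φ`. -/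
noncomputable def Phi (y : ℝ) : ℝ := ∫ z in Set.Iic y, stdPhi z

/-- The (possibly defective) first-passage-time density of Brownian motion started at `x`
through the line `a + b s`. -/
noncomputable def fpt (a x b s : ℝ) : ℝ :=
  (a - x) * s ^ (-(3:ℝ) / 2) * stdPhi ((a + b * s - x) / Real.sqrt s)

open Set Filter ProbabilityTheory
open scoped Topology

lemma stdPhi_eq_gaussianPDFReal : stdPhi = gaussianPDFReal 0 1 := by
  ext z
  simp [stdPhi, gaussianPDFReal, div_eq_inv_mul]

lemma stdPhi_pos (z : ℝ) : 0 < stdPhi z := by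
  rw [stdPhi_eq_gaussianPDFReal]
  exact gaussianPDFReal_pos _ _ _ one_ne_zero

lemma stdPhi_neg (z : ℝ) : stdPhi (-z) = stdPhi z := by simp [stdPhi]

lemma stdPhi_le_stdPhi {u v : ℝ} (hu : 0 ≤ u) (huv : u ≤ v) : stdPhi v ≤ stdPhi u := by
  unfold stdPhi
  gcongr

lemma stdPhi_add (u v : ℝ) : stdPhi (u + v) = Real.exp (-(2 * u * v)) * stdPhi (u - v) := by
  simp only [stdPhi, mul_div_assoc', ← Real.exp_add]
  ring_nf

lemma continuous_stdPhi : Continuous stdPhi := by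
  unfold stdPhi
  fun_prop

lemma Phi_eq_cdf : Phi = cdf (gaussianReal 0 1) := by
  ext y
  rw [cdf_eq_real, measureReal_def, gaussianReal_apply_eq_integral _ one_ne_zero,
    ENNReal.toReal_ofReal (setIntegral_nonneg measurableSet_Iic fun z _ ↦
      gaussianPDFReal_nonneg _ _ z), Phi, stdPhi_eq_gaussianPDFReal]

lemma hasDerivAt_Phi (y : ℝ) : HasDerivAt Phi (stdPhi y) y := by
  have hint : Integrable stdPhi := by
    rw [stdPhi_eq_gaussianPDFReal]; exact integrable_gaussianPDFReal 0 1
  have hPhi : Phi = fun y ↦ Phi 0 + ∫ z in (0:ℝ)..y, stdPhi z := by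
    ext y
    rw [Phi, Phi, ← intervalIntegral.integral_Iic_sub_Iic hint.integrableOn hint.integrableOn]
    ring
  rw [hPhi]
  exact (intervalIntegral.integral_hasDerivAt_right hint.intervalIntegrable
    (continuous_stdPhi.stronglyMeasurableAtFilter _ _)
    continuous_stdPhi.continuousAt).const_add _

@[fun_prop]
lemma continuous_Phi : Continuous Phi :=
  continuous_iff_continuousAt.2 fun y ↦ (hasDerivAt_Phi y).continuousAt

lemma tendsto_Phi_atTop : Tendsto Phi atTop (𝓝 1) := Phi_eq_cdf ▸ tendsto_cdf_atTop _

lemma tendsto_Phi_atBot : Tendsto Phi atBot (𝓝 0) := Phi_eq_cdf ▸ tendsto_cdf_atBot _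

lemma abs_one_sub_two_mul_Phi_le (y : ℝ) : |1 - 2 * Phi y| ≤ 1 := by
  rw [Phi_eq_cdf, abs_le]
  constructor <;> linarith [cdf_nonneg (gaussianReal 0 1) y, cdf_le_one (gaussianReal 0 1) y]

theorem integral_Ioi_of_hasDerivAt_of_nonneg_of_tendsto_nhdsGT {g g' : ℝ → ℝ} {a l₀ l : ℝ}
    (hderiv : ∀ x ∈ Ioi a, HasDerivAt g (g' x) x) (hg' : ∀ x ∈ Ioi a, 0 ≤ g' x)
    (h₀ : Tendsto g (𝓝[>] a) (𝓝 l₀)) (hl : Tendsto g atTop (𝓝 l)) :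
    IntegrableOn g' (Ioi a) ∧ ∫ x in Ioi a, g' x = l - l₀ := by
  set f := Function.update g a l₀
  have hcont : ContinuousWithinAt f (Ici a) a := by
    rwa [continuousWithinAt_update_same, Ici_sdiff_left]
  have hderiv' : ∀ x ∈ Ioi a, HasDerivAt f (g' x) x := fun x (hx : a < x) ↦
    (hderiv x hx).congr_of_eventuallyEq <| by
      filter_upwards [eventually_ne_nhds hx.ne'] with y hy
      exact Function.update_of_ne hy _ _
  have hl' : Tendsto f atTop (𝓝 l) := hl.congr' <| by
    filter_upwards [eventually_ne_atTop a] with x hx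
    exact (Function.update_of_ne hx _ _).symm
  refine ⟨integrableOn_Ioi_deriv_of_nonneg hcont hderiv' hg' hl', ?_⟩
  simpa [f] using integral_Ioi_of_hasDerivAt_of_nonneg hcont hderiv' hg' hl'

theorem ConcaveOn.le_tangent_of_hasDerivAt {S : Set ℝ} {f : ℝ → ℝ} {f' x y : ℝ}
    (hf : ConcaveOn ℝ S f) (hx : x ∈ S) (hy : y ∈ S) (hf' : HasDerivAt f f' x) :
    f y ≤ f x + f' * (y - x) := by
  rcases lt_trichotomy y x with hyx | rfl | hxy
  · have h := hf.le_slope_of_hasDerivAt hy hx hyx hf'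
    rw [slope_def_field, le_div_iff₀ (sub_pos.2 hyx)] at h
    linarith
  · simp
  · have h := hf.slope_le_of_hasDerivAt hx hy hxy hf'
    rw [slope_def_field, div_le_iff₀ (sub_pos.2 hxy)] at h
    linarith

theorem integral_mul_le_of_le_tangent {μ : Measure ℝ} {f h : ℝ → ℝ} {m d : ℝ}
    (hf : Integrable f μ) (hmf : Integrable (fun t ↦ t * f t) μ)
    (hhf : Integrable (fun t ↦ h t * f t) μ) (hf₀ : ∀ᵐ t ∂μ, 0 ≤ f t)
    (hf₁ : ∫ t, f t ∂μ = 1) (hm : ∫ t, t * f t ∂μ = m)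
    (htan : ∀ᵐ t ∂μ, h t ≤ h m + d * (t - m)) :
    ∫ t, h t * f t ∂μ ≤ h m := by
  have hline : Integrable (fun t ↦ (h m - d * m) * f t + d * (t * f t)) μ :=
    (hf.const_mul _).add (hmf.const_mul _)
  calc ∫ t, h t * f t ∂μ ≤ ∫ t, (h m - d * m) * f t + d * (t * f t) ∂μ := by
        refine integral_mono_ae hhf hline ?_
        filter_upwards [hf₀, htan] with t ht₀ ht
        nlinarith
    _ = h m := by
        rw [integral_add (hf.const_mul _) (hmf.const_mul _), integral_const_mul,
          integral_const_mul, hf₁, hm]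
        ring

lemma hasDerivAt_mul_sqrt_sub_div_sqrt (k c : ℝ) {s : ℝ} (hs : 0 < s) :
    HasDerivAt (fun t ↦ k * √t - c / √t) ((k * s + c) / (2 * s * √s)) s := by
  have hsqrt := Real.hasDerivAt_sqrt hs.ne'
  have hne : √s ≠ 0 := (Real.sqrt_pos.2 hs).ne'
  refine ((hsqrt.const_mul k).sub ((hasDerivAt_const s c).div hsqrt hne)).congr_deriv ?_
  field_simp
  rw [Real.sq_sqrt hs.le]
  ring

lemma tendsto_mul_sqrt_sub_div_sqrt_atTop {k : ℝ} (hk : 0 < k) (c : ℝ) :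
    Tendsto (fun t ↦ k * √t - c / √t) atTop atTop :=
  (Real.tendsto_sqrt_atTop.const_mul_atTop hk).atTop_add
    (tendsto_const_nhds.div_atTop Real.tendsto_sqrt_atTop).neg

lemma tendsto_mul_sqrt_sub_div_sqrt_atBot {k : ℝ} (hk : k < 0) (c : ℝ) :
    Tendsto (fun t ↦ k * √t - c / √t) atTop atBot := by
  have h := tendsto_mul_sqrt_sub_div_sqrt_atTop (neg_pos.2 hk) (-c)
  refine tendsto_neg_atTop_atBot.comp h |>.congr fun t ↦ ?_
  simp only [Function.comp, neg_div]
  ring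

lemma tendsto_mul_sqrt_sub_div_sqrt_nhdsGT (k : ℝ) {c : ℝ} (hc : 0 < c) :
    Tendsto (fun t ↦ k * √t - c / √t) (𝓝[>] 0) atBot := by
  have hsqrt : Tendsto (√·) (𝓝[>] 0) (𝓝[>] 0) := by
    have h := Real.continuous_sqrt.continuousWithinAt.tendsto_nhdsWithin (x := 0)
      (s := Ioi 0) (t := Ioi 0) fun t ht ↦ Real.sqrt_pos.2 ht
    rwa [Real.sqrt_zero] at h
  have hdiv : Tendsto (fun t ↦ c / √t) (𝓝[>] 0) atTop :=
    (tendsto_inv_nhdsGT_zero.comp hsqrt).const_mul_atTop hc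
  have hmul : Tendsto (fun t ↦ k * √t) (𝓝[>] 0) (𝓝 0) := by
    simpa using (hsqrt.mono_right nhdsWithin_le_nhds).const_mul k
  simpa [sub_eq_add_neg] using hmul.add_atBot (tendsto_neg_atTop_atBot.comp hdiv)

lemma hasDerivAt_Phi_mul_sqrt_sub_div_sqrt (k c : ℝ) {s : ℝ} (hs : 0 < s) :
    HasDerivAt (fun t ↦ Phi (k * √t - c / √t))
      (stdPhi (k * √s - c / √s) * ((k * s + c) / (2 * s * √s))) s :=
  (hasDerivAt_Phi _).comp s (hasDerivAt_mul_sqrt_sub_div_sqrt k c hs)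

section FirstPassage

variable {a x b : ℝ}

lemma fpt_eq (a x b : ℝ) {s : ℝ} (hs : 0 < s) :
    fpt a x b s = (a - x) / (s * √s) * stdPhi (b * √s + (a - x) / √s) := by
  have hsqrt : √s ^ 2 = s := Real.sq_sqrt hs.le
  have hrpow : s ^ (-(3:ℝ) / 2) = (s * √s)⁻¹ := by
    rw [neg_div, Real.rpow_neg hs.le, show (3:ℝ) / 2 = 1 + 1 / 2 by norm_num,
      Real.rpow_add hs, Real.rpow_one, Real.sqrt_eq_rpow]
  rw [fpt, hrpow, div_eq_mul_inv]
  congr 2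
  field_simp
  linear_combination (-b) * hsqrt

lemma fpt_nonneg (hx : x ≤ a) {s : ℝ} (hs : 0 < s) : 0 ≤ fpt a x b s := by
  rw [fpt_eq a x b hs]
  have := stdPhi_pos (b * √s + (a - x) / √s)
  have := sub_nonneg.2 hx
  positivity

/-- `s ↦ ∫₀ˢ fpt a x b` in closed form. -/
noncomputable def fptCDF (a x b s : ℝ) : ℝ :=
  Phi (-b * √s - (a - x) / √s) + Real.exp (-(2 * b * (a - x))) * Phi (b * √s - (a - x) / √s)

/-- `s ↦ ∫₀ˢ t * fpt a x b t dt` in closed form. -/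
noncomputable def fptPartialMean (a x b s : ℝ) : ℝ :=
  (a - x) / -b *
    (Phi (-b * √s - (a - x) / √s) - Real.exp (-(2 * b * (a - x))) * Phi (b * √s - (a - x) / √s))

lemma hasDerivAt_fptCDF_summands (a x b : ℝ) {s : ℝ} (hs : 0 < s) :
    HasDerivAt (fun t ↦ Phi (-b * √t - (a - x) / √t))
      ((a - x - b * s) / (2 * s * √s) * stdPhi (b * √s + (a - x) / √s)) s ∧
    HasDerivAt (fun t ↦ Real.exp (-(2 * b * (a - x))) * Phi (b * √t - (a - x) / √t))
      ((a - x + b * s) / (2 * s * √s) * stdPhi (b * √s + (a - x) / √s)) s := by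
  constructor
  · refine (hasDerivAt_Phi_mul_sqrt_sub_div_sqrt (-b) (a - x) hs).congr_deriv ?_
    rw [← stdPhi_neg]
    ring_nf
  · refine ((hasDerivAt_Phi_mul_sqrt_sub_div_sqrt b (a - x) hs).const_mul _).congr_deriv ?_
    rw [stdPhi_add, show 2 * (b * √s) * ((a - x) / √s) = 2 * b * (a - x) by field_simp]
    ring

lemma hasDerivAt_fptCDF (a x b : ℝ) {s : ℝ} (hs : 0 < s) :
    HasDerivAt (fptCDF a x b) (fpt a x b s) s := by
  obtain ⟨h₁, h₂⟩ := hasDerivAt_fptCDF_summands a x b hs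
  refine (h₁.add h₂).congr_deriv ?_
  rw [fpt_eq a x b hs]
  field_simp
  ring

lemma hasDerivAt_fptPartialMean (hb : b ≠ 0) {s : ℝ} (hs : 0 < s) :
    HasDerivAt (fptPartialMean a x b) (s * fpt a x b s) s := by
  obtain ⟨h₁, h₂⟩ := hasDerivAt_fptCDF_summands a x b hs
  refine ((h₁.sub h₂).const_mul ((a - x) / -b)).congr_deriv ?_
  rw [fpt_eq a x b hs]
  field_simp
  ring

lemma tendsto_fptCDF_atTop (hb : b < 0) : Tendsto (fptCDF a x b) atTop (𝓝 1) := by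
  have h₁ := tendsto_Phi_atTop.comp (tendsto_mul_sqrt_sub_div_sqrt_atTop (neg_pos.2 hb) (a - x))
  have h₂ := tendsto_Phi_atBot.comp (tendsto_mul_sqrt_sub_div_sqrt_atBot hb (a - x))
  unfold fptCDF
  simpa using h₁.add (h₂.const_mul (Real.exp (-(2 * b * (a - x)))))

lemma tendsto_fptPartialMean_atTop (hb : b < 0) :
    Tendsto (fptPartialMean a x b) atTop (𝓝 ((a - x) / -b)) := by
  have h₁ := tendsto_Phi_atTop.comp (tendsto_mul_sqrt_sub_div_sqrt_atTop (neg_pos.2 hb) (a - x))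
  have h₂ := tendsto_Phi_atBot.comp (tendsto_mul_sqrt_sub_div_sqrt_atBot hb (a - x))
  unfold fptPartialMean
  simpa using (h₁.sub (h₂.const_mul (Real.exp (-(2 * b * (a - x)))))).const_mul ((a - x) / -b)

lemma tendsto_fptCDF_nhdsGT (hx : x < a) : Tendsto (fptCDF a x b) (𝓝[>] 0) (𝓝 0) := by
  have h₁ := tendsto_Phi_atBot.comp (tendsto_mul_sqrt_sub_div_sqrt_nhdsGT (-b) (sub_pos.2 hx))
  have h₂ := tendsto_Phi_atBot.comp (tendsto_mul_sqrt_sub_div_sqrt_nhdsGT b (sub_pos.2 hx))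
  unfold fptCDF
  simpa using h₁.add (h₂.const_mul (Real.exp (-(2 * b * (a - x)))))

lemma tendsto_fptPartialMean_nhdsGT (hx : x < a) :
    Tendsto (fptPartialMean a x b) (𝓝[>] 0) (𝓝 0) := by
  have h₁ := tendsto_Phi_atBot.comp (tendsto_mul_sqrt_sub_div_sqrt_nhdsGT (-b) (sub_pos.2 hx))
  have h₂ := tendsto_Phi_atBot.comp (tendsto_mul_sqrt_sub_div_sqrt_nhdsGT b (sub_pos.2 hx))
  unfold fptPartialMean
  simpa using (h₁.sub (h₂.const_mul (Real.exp (-(2 * b * (a - x)))))).const_mul ((a - x) / -b)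

theorem integral_fpt (hx : x < a) (hb : b < 0) :
    IntegrableOn (fpt a x b) (Ioi 0) ∧ ∫ s in Ioi 0, fpt a x b s = 1 := by
  simpa using integral_Ioi_of_hasDerivAt_of_nonneg_of_tendsto_nhdsGT
    (fun s hs ↦ hasDerivAt_fptCDF a x b hs) (fun s hs ↦ fpt_nonneg hx.le hs)
    (tendsto_fptCDF_nhdsGT hx) (tendsto_fptCDF_atTop hb)

theorem integral_mul_fpt (hx : x < a) (hb : b < 0) :
    IntegrableOn (fun s ↦ s * fpt a x b s) (Ioi 0) ∧
      ∫ s in Ioi 0, s * fpt a x b s = (a - x) / -b := by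
  simpa using integral_Ioi_of_hasDerivAt_of_nonneg_of_tendsto_nhdsGT
    (fun s hs ↦ hasDerivAt_fptPartialMean hb.ne hs)
    (fun s (hs : 0 < s) ↦ mul_nonneg hs.le (fpt_nonneg hx.le hs))
    (tendsto_fptPartialMean_nhdsGT hx) (tendsto_fptPartialMean_atTop hb)

end FirstPassage

lemma hasDerivAt_one_sub_two_mul_Phi_mul_sqrt (b : ℝ) {s : ℝ} (hs : 0 < s) :
    HasDerivAt (fun t ↦ 1 - 2 * Phi (b * √t)) (-b * stdPhi (b * √s) / √s) s := by
  refine (((hasDerivAt_Phi _).comp s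
    ((Real.hasDerivAt_sqrt hs.ne').const_mul b)).const_mul 2).const_sub 1 |>.congr_deriv ?_
  field_simp

lemma concaveOn_one_sub_two_mul_Phi_mul_sqrt {b : ℝ} (hb : b ≤ 0) :
    ConcaveOn ℝ (Ioi 0) (fun t ↦ 1 - 2 * Phi (b * √t)) := by
  have hderiv := fun s (hs : s ∈ Ioi (0:ℝ)) ↦ hasDerivAt_one_sub_two_mul_Phi_mul_sqrt b hs
  refine AntitoneOn.concaveOn_of_deriv (convex_Ioi 0) (by fun_prop) ?_ ?_ <;>
    rw [interior_Ioi]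
  · exact fun s hs ↦ (hderiv s hs).differentiableAt.differentiableWithinAt
  · intro s (hs : 0 < s) t (ht : 0 < t) hst
    rw [(hderiv s hs).deriv, (hderiv t ht).deriv, ← stdPhi_neg (b * √s), ← stdPhi_neg (b * √t)]
    have hb' : 0 ≤ -b := neg_nonneg.2 hb
    have hsqrt : √s ≤ √t := Real.sqrt_le_sqrt hst
    have hphi : stdPhi (-(b * √t)) ≤ stdPhi (-(b * √s)) :=
      stdPhi_le_stdPhi (by nlinarith [Real.sqrt_nonneg s]) (by nlinarith)
    gcongr
    exact mul_nonneg hb' (stdPhi_pos _).le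

/-- for `x < a` and `b < 0`, Jensen's inequality gives
`P(T₂ = +∞) = ∫_0^∞ (1 - 2Φ(b√s)) f(s) ds ≤ γ(b) = 1 - 2Φ(-√((a-x)|b|))`. -/
theorem stmt_8 (a x b : ℝ) (hx : x < a) (hb : b < 0) :
    (∫ s in Set.Ioi (0:ℝ), (1 - 2 * Phi (b * Real.sqrt s)) * fpt a x b s) ≤
      1 - 2 * Phi (-Real.sqrt ((a - x) * |b|)) := by
  set h : ℝ → ℝ := fun s ↦ 1 - 2 * Phi (b * √s)
  set m := (a - x) / -b
  have hm : 0 < m := div_pos (sub_pos.2 hx) (neg_pos.2 hb)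
  obtain ⟨hf, hf₁⟩ := integral_fpt hx hb
  obtain ⟨hmf, hmean⟩ := integral_mul_fpt hx hb
  have hhf : IntegrableOn (fun s ↦ h s * fpt a x b s) (Ioi 0) :=
    hf.bdd_mul (c := 1) (by fun_prop : Continuous h).aestronglyMeasurable
      (ae_of_all _ fun s ↦ abs_one_sub_two_mul_Phi_le _)
  have hγ : 1 - 2 * Phi (-√((a - x) * |b|)) = h m := by
    have hbm : -b * m = a - x := by simp only [m]; field_simp [hb.ne]
    have hsqrt : √((a - x) * -b) = -b * √m := by
      rw [← Real.sqrt_sq (neg_nonneg.2 hb.le), ← Real.sqrt_mul (sq_nonneg _),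
        Real.sqrt_sq (neg_nonneg.2 hb.le)]
      congr 1
      linear_combination b * hbm
    simp only [h, abs_of_neg hb, hsqrt]
    ring_nf
  have htan : ∀ s ∈ Ioi (0:ℝ), h s ≤ h m + -b * stdPhi (b * √m) / √m * (s - m) :=
    fun s hs ↦ (concaveOn_one_sub_two_mul_Phi_mul_sqrt hb.le).le_tangent_of_hasDerivAt hm hs
      (hasDerivAt_one_sub_two_mul_Phi_mul_sqrt b hm)
  rw [hγ]
  exact integral_mul_le_of_le_tangent hf hmf hhf
    (ae_restrict_of_forall_mem measurableSet_Ioi fun s hs ↦ fpt_nonneg hx.le hs) hf₁ hmean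
    (ae_restrict_of_forall_mem measurableSet_Ioi htan)
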